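/- arXiv:2604.11725 — 3 statements merged into one kernel-verified Lean document; each statement's English description precedes it below -/
import Mathlib

section
/- (Schwartz–Zippel) Let P ∈ F[x₁,…,xₙ] be a nonzero polynomial of total degree at most d over a field F, let S be a finite nonempty subset of F, and let r₁,…,rₙ be chosen independently and uniformly at random from S. Then the probability that P(r₁,…,rₙ) = 0 is at most d/|S|. -/
theorem schwartz_zippel_general {F : Type*} [Field F] [DecidableEq F] {n : ℕ}
    (P : MvPolynomial (Fin n) F) (hP : P ≠ 0) (d : ℕ) (hd : P.totalDegree ≤ d)
    (S : Finset F) :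
    (((Fintype.piFinset fun _ : Fin n => S).filter
        fun x => MvPolynomial.eval x P = 0).card : ℝ) / ((S.card : ℝ) ^ n)
      ≤ (d : ℝ) / (S.card : ℝ) := by
  have h := NNRat.cast_le (K := ℝ) |>.mpr (MvPolynomial.schwartz_zippel_totalDegree hP S)
  push_cast at h
  calc _ ≤ (P.totalDegree : ℝ) / S.card := h
    _ ≤ d / S.card := by gcongr

/-- **Schwartz–Zippel lemma.** If `P` is a nonzero polynomial in `n` variables over a
field `F` of total degree at most `d`, and `r₁,…,rₙ` are chosen independently and
uniformly at random from a finite nonempty subset `S ⊆ F`, then the probability that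
`P(r₁,…,rₙ) = 0` is at most `d / |S|`. -/
theorem schwartz_zippel {F : Type*} [Field F] [DecidableEq F] {n : ℕ}
    (P : MvPolynomial (Fin n) F) (hP : P ≠ 0) (d : ℕ) (hd : P.totalDegree ≤ d)
    (S : Finset F) (hS : S.Nonempty) :
    (((Fintype.piFinset fun _ : Fin n => S).filter
        fun x => MvPolynomial.eval x P = 0).card : ℝ) / ((S.card : ℝ) ^ n)
      ≤ (d : ℝ) / (S.card : ℝ) :=
  schwartz_zippel_general P hP d hd S
end

section
/- Let F be a field, M an r × ℓ matrix of rank ℓ over F, and let w₁,…,w_r be chosen independently and uniformly at random from a finite subset S ⊆ F. Let B = diag(w₁,…,w_r). Then Pr[rank(MᵀBM) < ℓ] ≤ ℓ/|S|. -/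
/-!
Let `P = det (Mᵀ · diag(X₁, …, X_r) · M)` with indeterminates `Xᵢ`, so that evaluating `P` at `w`
gives `det (Mᵀ B M)`. Each entry of the matrix is linear in the `Xᵢ`, hence `deg P ≤ ℓ`.
Since `M` has rank `ℓ`, some `ℓ` rows of `M` form an invertible `ℓ × ℓ` matrix `M'`; substituting
`0` for the variables of the other rows turns `P` into `det(M')² · ∏ Xᵢ ≠ 0`. A singular `Mᵀ B M`
is a zero of `P`, so the Schwartz–Zippel lemma bounds the probability by `ℓ / |S|`.
-/

open Matrix MvPolynomial Finset

lemma MvPolynomial.totalDegree_C_mul_X_mul_C_le {σ R : Type*} [CommSemiring R] (a b : R) (i : σ) :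
    (C a * X i * C b : MvPolynomial σ R).totalDegree ≤ 1 := by
  rw [mul_right_comm, ← C_mul, C_mul_X_eq_monomial]
  exact (totalDegree_monomial_le _ _).trans (by simp)

namespace Matrix

variable {m n R : Type*}

lemma exists_injective_det_submatrix_ne_zero {K : Type*} [Field K] [Fintype m] [Fintype n]
    [DecidableEq n] (A : Matrix m n K) (hA : A.rank = Fintype.card n) :
    ∃ g : n → m, g.Injective ∧ (A.submatrix g id).det ≠ 0 := by
  obtain ⟨κ, a, ha, hspan, hli⟩ := exists_linearIndependent' K A.row
  have : Fintype κ := Fintype.ofInjective a ha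
  have hcard : Fintype.card n = Fintype.card κ := by
    rw [← hA, rank_eq_finrank_span_row, ← hspan, finrank_span_eq_card hli]
  let e : n ≃ κ := Fintype.equivOfCardEq hcard
  refine ⟨a ∘ e, ha.comp e.injective, ?_⟩
  rw [← isUnit_iff_ne_zero, ← isUnit_iff_isUnit_det, ← linearIndependent_rows_iff_isUnit]
  exact hli.comp e e.injective

variable [Fintype m] [DecidableEq m]

lemma transpose_mul_diagonal_extend_mul [CommSemiring R] {l : Type*} [Fintype n] [DecidableEq n]
    (A : Matrix m l R) {g : n → m} (hg : g.Injective) (w : n → R) :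
    Aᵀ * diagonal (Function.extend g w 0) * A
      = (A.submatrix g id)ᵀ * diagonal w * A.submatrix g id := by
  ext a b
  rw [mul_apply, mul_apply]
  simp only [mul_diagonal, transpose_apply, submatrix_apply, id]
  refine (Fintype.sum_of_injective g hg _ _ (fun i hi => ?_) fun j => ?_).symm
  · rw [Function.extend_apply' _ _ _ fun ⟨j, hj⟩ => hi ⟨j, hj⟩, Pi.zero_apply, mul_zero,
      zero_mul]
  · rw [hg.extend_apply]

lemma _root_.RingHom.map_det_transpose_mul_diagonal_mul {S : Type*} [CommRing R] [CommRing S]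
    [Fintype n] [DecidableEq n] (f : R →+* S) (A : Matrix m n R) (d : m → R) :
    f (Aᵀ * diagonal d * A).det = ((A.map f)ᵀ * diagonal (f ∘ d) * A.map f).det := by
  rw [RingHom.map_det, RingHom.mapMatrix_apply, Matrix.map_mul, Matrix.map_mul, transpose_map,
    diagonal_map (map_zero f)]
  rfl

lemma totalDegree_det_le {σ : Type*} [CommRing R] (A : Matrix m m (MvPolynomial σ R)) {d : ℕ}
    (hA : ∀ i j, (A i j).totalDegree ≤ d) : A.det.totalDegree ≤ Fintype.card m * d := by
  rw [det_apply]
  refine totalDegree_finsetSum_le fun τ _ => (totalDegree_smul_le _ _).trans ?_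
  refine (totalDegree_finsetProd _ _).trans ?_
  simpa using Finset.sum_le_sum fun i (_ : i ∈ univ) => hA (τ i) i

variable [Fintype n] [DecidableEq n] [CommRing R]

noncomputable def weightedGramDet (A : Matrix m n R) : MvPolynomial m R :=
  let A' : Matrix m n (MvPolynomial m R) := A.map C
  (A'ᵀ * diagonal (X : m → MvPolynomial m R) * A').det

lemma eval_weightedGramDet (A : Matrix m n R) (w : m → R) :
    eval w A.weightedGramDet = (Aᵀ * diagonal w * A).det := by
  dsimp only [weightedGramDet]
  rw [RingHom.map_det_transpose_mul_diagonal_mul, Matrix.map_map]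
  congr <;> ext <;> simp

lemma totalDegree_weightedGramDet_le (A : Matrix m n R) :
    A.weightedGramDet.totalDegree ≤ Fintype.card n := by
  refine (totalDegree_det_le _ (d := 1) fun a b => ?_).trans_eq (mul_one _)
  rw [mul_apply]
  exact totalDegree_finsetSum_le fun i _ => by
    simpa only [mul_diagonal, transpose_apply, map_apply] using totalDegree_C_mul_X_mul_C_le _ _ i

lemma weightedGramDet_ne_zero [IsDomain R] (A : Matrix m n R) {g : n → m} (hg : g.Injective)
    (hA : (A.submatrix g id).det ≠ 0) : A.weightedGramDet ≠ 0 := by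
  set φ : MvPolynomial m R →+* MvPolynomial n R := eval₂Hom C (Function.extend g X 0)
  have hφC : φ ∘ C = C := by ext; simp [φ]
  have hφX : φ ∘ X = Function.extend g X 0 := by ext; simp [φ]
  have hdet : ((A.map (C : R →+* MvPolynomial n R)).submatrix g id).det =
      C (A.submatrix g id).det := by
    rw [RingHom.map_det]
    rfl
  have hφA : φ A.weightedGramDet =
      C (A.submatrix g id).det * (∏ i, X i) * C (A.submatrix g id).det := by
    dsimp only [weightedGramDet]
    rw [RingHom.map_det_transpose_mul_diagonal_mul, Matrix.map_map, hφC, hφX,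
      transpose_mul_diagonal_extend_mul _ hg, det_mul, det_mul, det_transpose, det_diagonal, hdet]
  have hC0 : (C (A.submatrix g id).det : MvPolynomial n R) ≠ 0 := by rwa [Ne, C_eq_zero]
  intro h0
  rw [h0, map_zero] at hφA
  exact mul_ne_zero (mul_ne_zero hC0 (prod_ne_zero_iff.mpr fun i _ => X_ne_zero i)) hC0 hφA.symm

end Matrix

open Classical in
theorem prob_rank_lt_le_general {F : Type*} [Field F] {r ℓ : ℕ}
    (M : Matrix (Fin r) (Fin ℓ) F) (hrank : M.rank = ℓ)
    (S : Finset F) :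
    (((Fintype.piFinset fun _ : Fin r => S).filter
        fun w => (Mᵀ * Matrix.diagonal w * M).rank < ℓ).card : ℝ) / ((S.card : ℝ) ^ r)
      ≤ (ℓ : ℝ) / (S.card : ℝ) := by
  obtain ⟨g, hg, hdet⟩ :=
    M.exists_injective_det_submatrix_ne_zero (by rwa [Fintype.card_fin])
  have hsub : {w ∈ Fintype.piFinset fun _ : Fin r => S | (Mᵀ * diagonal w * M).rank < ℓ} ⊆
      {w ∈ Fintype.piFinset fun _ : Fin r => S | eval w M.weightedGramDet = 0} := by
    refine monotone_filter_right _ fun w _ hw => ?_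
    rw [eval_weightedGramDet]
    contrapose! hw
    rw [rank_of_det_ne_zero hw, Fintype.card_fin]
  have hdeg : (M.weightedGramDet.totalDegree : ℚ≥0) ≤ ℓ := by
    exact_mod_cast M.totalDegree_weightedGramDet_le.trans_eq (Fintype.card_fin ℓ)
  have key : (#{w ∈ Fintype.piFinset fun _ : Fin r => S | (Mᵀ * diagonal w * M).rank < ℓ}
      : ℚ≥0) / #S ^ r ≤ ℓ / #S := calc
    _ ≤ (#{w ∈ Fintype.piFinset fun _ : Fin r => S | eval w M.weightedGramDet = 0} : ℚ≥0)
        / #S ^ r := by gcongr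
    _ ≤ M.weightedGramDet.totalDegree / #S :=
      schwartz_zippel_totalDegree (M.weightedGramDet_ne_zero hg hdet) S
    _ ≤ ℓ / #S := by gcongr
  have key_real := NNRat.cast_le (K := ℝ).mpr key
  push_cast at key_real
  exact key_real

open Classical in
/-- If `M` is an `r × ℓ` matrix of rank `ℓ` over a field `F` and `w₁,…,w_r` are chosen
independently and uniformly at random from a finite nonempty subset `S ⊆ F`, then for
`B = diag(w₁,…,w_r)` we have `Pr[rank(MᵀBM) < ℓ] ≤ ℓ / |S|`. -/
theorem prob_rank_lt_le {F : Type*} [Field F] {r ℓ : ℕ}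
    (M : Matrix (Fin r) (Fin ℓ) F) (hrank : M.rank = ℓ)
    (S : Finset F) (hS : S.Nonempty) :
    (((Fintype.piFinset fun _ : Fin r => S).filter
        fun w => (Mᵀ * Matrix.diagonal w * M).rank < ℓ).card : ℝ) / ((S.card : ℝ) ^ r)
      ≤ (ℓ : ℝ) / (S.card : ℝ) :=
  prob_rank_lt_le_general M hrank S
end

section
/- (Edmonds' matroid intersection theorem) Let M₁ = (V, I₁) and M₂ = (V, I₂) be matroids on a finite ground set V with rank functions rank₁ and rank₂. Then max{|I| : I ∈ I₁ ∩ I₂} = min{rank₁(S) + rank₂(T) : S, T ⊆ V, S ∪ T = V}. -/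
open Classical

variable {V : Type*} [DecidableEq V] [Fintype V]

/-- A matroid on a finite ground set `V`, given by its family of independent sets:
a nonempty, downward closed family satisfying the augmentation property. -/
structure FinMatroid (V : Type*) [DecidableEq V] [Fintype V] where
  Indep : Finset V → Prop
  exists_indep : ∃ I, Indep I
  indep_subset : ∀ ⦃I J : Finset V⦄, Indep I → J ⊆ I → Indep J
  indep_aug : ∀ ⦃I J : Finset V⦄, Indep I → Indep J → J.card < I.card →
    ∃ v ∈ I \ J, Indep (insert v J)

/-- The rank of a set `S`: the maximum size of an independent subset of `S`. -/
noncomputable def FinMatroid.rank (M : FinMatroid V) (S : Finset V) : ℕ :=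
  (S.powerset.filter M.Indep).sup Finset.card

/-- The span of a set `S`: all elements `v` with `rank (S ∪ {v}) = rank S`. -/
noncomputable def FinMatroid.spanSet (M : FinMatroid V) (S : Finset V) : Finset V :=
  Finset.univ.filter fun v => M.rank (insert v S) = M.rank S

/-!
Weak duality is immediate: a common independent set `I ⊆ S ∪ T` splits into `I ∩ S` and
`I ∩ T`, of sizes at most `rank₁ S` and `rank₂ T`.

For the converse we find, for every `E`, a cover `E ⊆ S ∪ T` with `rank₁ S + rank₂ T` at most
the maximum size `k` of a common independent subset of `E`, by induction on `E = insert v s`.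
If `v` is a loop of either matroid, it joins the corresponding side of a cover of `s` for free.
Otherwise take a cover `(S, T)` of `s` for `M₁, M₂` (cost `≤ k`) and a cover `(S', T')` of `s`
for the contractions `M₁ / v, M₂ / v` (cost `≤ k - 1`, as a common independent set of the
contractions extends by `v`); then `(A, B) = (S' + v, T' + v)` costs at most `k + 1` in
`M₁, M₂`. By submodularity the uncrossed covers `(S ∪ A, T ∩ B)` and `(S ∩ A, T ∪ B)` of
`insert v s` cost at most `2k + 1` together, so one of them costs at most `k`.
-/

theorem Finset.union_inter_subset_union_union_inter {α : Type*} [DecidableEq α]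
    {X S T A B : Finset α} (hST : X ⊆ S ∪ T) (hAB : X ⊆ A ∪ B) :
    X ∪ A ∩ B ⊆ (S ∪ A) ∪ T ∩ B := by
  intro x hx
  have := @hST x
  have := @hAB x
  simp only [Finset.mem_union, Finset.mem_inter] at *
  tauto

namespace FinMatroid

section Rank

variable (M : FinMatroid V)

theorem indep_empty : M.Indep ∅ := by
  obtain ⟨I, hI⟩ := M.exists_indep
  exact M.indep_subset hI (Finset.empty_subset I)

theorem card_le_rank {I S : Finset V} (hIS : I ⊆ S) (hI : M.Indep I) : I.card ≤ M.rank S :=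
  Finset.le_sup (by simp [hIS, hI])

theorem exists_indep_subset_card_eq_rank (S : Finset V) :
    ∃ I ⊆ S, M.Indep I ∧ I.card = M.rank S := by
  obtain ⟨I, hI, hcard⟩ :=
    Finset.exists_mem_eq_sup (S.powerset.filter M.Indep) ⟨∅, by simp [M.indep_empty]⟩ Finset.card
  simp only [Finset.mem_filter, Finset.mem_powerset] at hI
  exact ⟨I, hI.1, hI.2, hcard.symm⟩

theorem rank_mono {S T : Finset V} (h : S ⊆ T) : M.rank S ≤ M.rank T := by
  obtain ⟨I, hIS, hI, hcard⟩ := M.exists_indep_subset_card_eq_rank S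
  exact hcard ▸ M.card_le_rank (hIS.trans h) hI

theorem card_inter_le_rank {I : Finset V} (hI : M.Indep I) (S : Finset V) :
    (I ∩ S).card ≤ M.rank S :=
  M.card_le_rank Finset.inter_subset_right (M.indep_subset hI Finset.inter_subset_left)

theorem rank_empty : M.rank ∅ = 0 := by
  simp [rank]

theorem exists_indep_superset_card_eq_rank {I S : Finset V} (hIS : I ⊆ S) (hI : M.Indep I) :
    ∃ J, I ⊆ J ∧ J ⊆ S ∧ M.Indep J ∧ J.card = M.rank S := by
  obtain ⟨J, hJ, hmax⟩ := (S.powerset.filter fun J => I ⊆ J ∧ M.Indep J).exists_max_image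
    Finset.card ⟨I, by simp [hIS, hI]⟩
  simp only [Finset.mem_filter, Finset.mem_powerset] at hJ hmax
  obtain ⟨hJS, hIJ, hJ⟩ := hJ
  refine ⟨J, hIJ, hJS, hJ, le_antisymm (M.card_le_rank hJS hJ) (not_lt.1 fun hlt => ?_)⟩
  obtain ⟨B, hBS, hB, hBcard⟩ := M.exists_indep_subset_card_eq_rank S
  obtain ⟨w, hw, hwJ⟩ := M.indep_aug hB hJ (hBcard ▸ hlt)
  rw [Finset.mem_sdiff] at hw
  have hle := hmax (insert w J)
    ⟨Finset.insert_subset (hBS hw.1) hJS, hIJ.trans (Finset.subset_insert w J), hwJ⟩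
  rw [Finset.card_insert_of_notMem hw.2] at hle
  omega

-- Extend a basis `I` of `A ∩ B` to a basis `J` of `A ∪ B`; then
-- `|J ∩ A| + |J ∩ B| = |J| + |J ∩ (A ∩ B)| ≥ rank (A ∪ B) + |I|`.
theorem rank_inter_add_rank_union_le (A B : Finset V) :
    M.rank (A ∩ B) + M.rank (A ∪ B) ≤ M.rank A + M.rank B := by
  obtain ⟨I, hIAB, hI, hIcard⟩ := M.exists_indep_subset_card_eq_rank (A ∩ B)
  obtain ⟨J, hIJ, hJAB, hJ, hJcard⟩ := M.exists_indep_superset_card_eq_rank (S := A ∪ B)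
    (hIAB.trans (Finset.inter_subset_left.trans Finset.subset_union_left)) hI
  have hJA := M.card_inter_le_rank hJ A
  have hJB := M.card_inter_le_rank hJ B
  have hunion : J ∩ A ∪ J ∩ B = J := by
    rw [← Finset.inter_union_distrib_left, Finset.inter_eq_left.2 hJAB]
  have hinter : J ∩ A ∩ (J ∩ B) = J ∩ (A ∩ B) := (Finset.inter_inter_distrib_left J A B).symm
  have hI_le : I.card ≤ (J ∩ (A ∩ B)).card :=
    Finset.card_le_card (Finset.subset_inter hIJ hIAB)
  have hcard := Finset.card_union_add_card_inter (J ∩ A) (J ∩ B)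
  rw [hunion, hinter] at hcard
  omega

theorem rank_insert_of_not_indep_singleton {v : V} (hv : ¬ M.Indep {v}) (S : Finset V) :
    M.rank (insert v S) = M.rank S := by
  refine le_antisymm ?_ (M.rank_mono (Finset.subset_insert v S))
  obtain ⟨I, hIS, hI, hcard⟩ := M.exists_indep_subset_card_eq_rank (insert v S)
  have hvI : v ∉ I := fun hvI => hv (M.indep_subset hI (Finset.singleton_subset_iff.2 hvI))
  exact hcard ▸ M.card_le_rank ((Finset.subset_insert_iff_of_notMem hvI).1 hIS) hI

end Rank

section Contract

variable (M : FinMatroid V) {v : V} (hv : M.Indep {v})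

def contract : FinMatroid V where
  Indep I := v ∉ I ∧ M.Indep (insert v I)
  exists_indep := ⟨∅, by simpa using hv⟩
  indep_subset := by
    rintro I J ⟨hvI, hI⟩ hJI
    exact ⟨fun hvJ => hvI (hJI hvJ), M.indep_subset hI (Finset.insert_subset_insert v hJI)⟩
  indep_aug := by
    rintro I J ⟨hvI, hI⟩ ⟨hvJ, hJ⟩ hcard
    obtain ⟨w, hw, hwJ⟩ := M.indep_aug hI hJ
      (by rw [Finset.card_insert_of_notMem hvI, Finset.card_insert_of_notMem hvJ]; omega)
    simp only [Finset.mem_sdiff, Finset.mem_insert, not_or] at hw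
    obtain ⟨hwI | hwI, hwv, hwJ'⟩ := hw
    · exact absurd hwI hwv
    refine ⟨w, Finset.mem_sdiff.2 ⟨hwI, hwJ'⟩, ?_, ?_⟩
    · simp only [Finset.mem_insert, not_or]
      exact ⟨Ne.symm hwv, hvJ⟩
    · rwa [Finset.insert_comm]

theorem rank_contract_add_one (X : Finset V) :
    (M.contract hv).rank X + 1 = M.rank (insert v X) := by
  apply le_antisymm
  · obtain ⟨I, hIX, ⟨hvI, hI⟩, hcard⟩ := (M.contract hv).exists_indep_subset_card_eq_rank X
    have := M.card_le_rank (Finset.insert_subset_insert v hIX) hI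
    rw [Finset.card_insert_of_notMem hvI] at this
    omega
  · obtain ⟨B, hvB, hBX, hB, hcard⟩ := M.exists_indep_superset_card_eq_rank
      (Finset.singleton_subset_iff.2 (Finset.mem_insert_self v X)) hv
    have hvB : v ∈ B := Finset.singleton_subset_iff.1 hvB
    have hBv : (M.contract hv).Indep (B.erase v) :=
      ⟨Finset.notMem_erase v B, by rwa [Finset.insert_erase hvB]⟩
    have := (M.contract hv).card_le_rank
      ((Finset.erase_subset_erase v hBX).trans (Finset.erase_insert_subset v X)) hBv
    rw [Finset.card_erase_of_mem hvB] at this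
    omega

end Contract

section Intersection

variable {M₁ M₂ : FinMatroid V}

theorem card_le_rank_add_rank {I S T : Finset V} (h₁ : M₁.Indep I) (h₂ : M₂.Indep I)
    (hIST : I ⊆ S ∪ T) : I.card ≤ M₁.rank S + M₂.rank T := by
  have hI : I ⊆ I ∩ S ∪ I ∩ T := by
    rw [← Finset.inter_union_distrib_left, Finset.inter_eq_left.2 hIST]
  calc I.card ≤ (I ∩ S ∪ I ∩ T).card := Finset.card_le_card hI
    _ ≤ (I ∩ S).card + (I ∩ T).card := Finset.card_union_le _ _
    _ ≤ M₁.rank S + M₂.rank T :=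
      add_le_add (M₁.card_inter_le_rank h₁ S) (M₂.card_inter_le_rank h₂ T)

theorem exists_cover_rank_add_rank_le_of_uncross {X S T A B : Finset V} {k : ℕ}
    (hST : X ⊆ S ∪ T) (hAB : X ⊆ A ∪ B)
    (hsum : M₁.rank S + M₂.rank T + (M₁.rank A + M₂.rank B) ≤ 2 * k + 1) :
    ∃ S₀ T₀, X ∪ A ∩ B ⊆ S₀ ∪ T₀ ∧ M₁.rank S₀ + M₂.rank T₀ ≤ k := by
  have h₁ := M₁.rank_inter_add_rank_union_le S A
  have h₂ := M₂.rank_inter_add_rank_union_le T B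
  by_cases hcost : M₁.rank (S ∪ A) + M₂.rank (T ∩ B) ≤ k
  · exact ⟨_, _, Finset.union_inter_subset_union_union_inter hST hAB, hcost⟩
  · refine ⟨S ∩ A, T ∪ B, ?_, by omega⟩
    rw [Finset.union_comm (S ∩ A), Finset.inter_comm A]
    exact Finset.union_inter_subset_union_union_inter
      (Finset.union_comm S T ▸ hST) (Finset.union_comm A B ▸ hAB)

variable (M₁ M₂) in
noncomputable def maxCommon (E : Finset V) : ℕ :=
  (E.powerset.filter fun I => M₁.Indep I ∧ M₂.Indep I).sup Finset.card

theorem card_le_maxCommon {I E : Finset V} (hIE : I ⊆ E) (h₁ : M₁.Indep I) (h₂ : M₂.Indep I) :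
    I.card ≤ maxCommon M₁ M₂ E :=
  Finset.le_sup (by simp [hIE, h₁, h₂])

theorem maxCommon_mono {E F : Finset V} (h : E ⊆ F) : maxCommon M₁ M₂ E ≤ maxCommon M₁ M₂ F :=
  Finset.sup_mono (Finset.filter_subset_filter _ (Finset.powerset_mono.2 h))

theorem maxCommon_contract_add_one_le {v : V} (h₁ : M₁.Indep {v}) (h₂ : M₂.Indep {v})
    (E : Finset V) : maxCommon (M₁.contract h₁) (M₂.contract h₂) E + 1 ≤
      maxCommon M₁ M₂ (insert v E) := by
  obtain ⟨J, hJ, hcard⟩ := Finset.exists_mem_eq_sup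
    (E.powerset.filter fun I => (M₁.contract h₁).Indep I ∧ (M₂.contract h₂).Indep I)
    ⟨∅, by simp [(M₁.contract h₁).indep_empty, (M₂.contract h₂).indep_empty]⟩ Finset.card
  simp only [Finset.mem_filter, Finset.mem_powerset] at hJ
  obtain ⟨hJE, ⟨hvJ, hJ₁⟩, -, hJ₂⟩ := hJ
  have := card_le_maxCommon (Finset.insert_subset_insert v hJE) hJ₁ hJ₂
  rw [Finset.card_insert_of_notMem hvJ] at this
  rwa [maxCommon, hcard]

variable (M₁ M₂) in
theorem exists_cover_rank_add_rank_le_maxCommon (E : Finset V) :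
    ∃ S T, E ⊆ S ∪ T ∧ M₁.rank S + M₂.rank T ≤ maxCommon M₁ M₂ E := by
  induction E using Finset.induction_on generalizing M₁ M₂ with
  | empty => exact ⟨∅, ∅, le_rfl, by simp [rank_empty]⟩
  | insert v s _ ih =>
    obtain ⟨S, T, hST, hcost⟩ := ih M₁ M₂
    have hmono : maxCommon M₁ M₂ s ≤ maxCommon M₁ M₂ (insert v s) :=
      maxCommon_mono (Finset.subset_insert v s)
    by_cases h₁ : M₁.Indep {v}
    case neg =>
      refine ⟨insert v S, T, Finset.insert_union v S T ▸ Finset.insert_subset_insert v hST, ?_⟩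
      rw [M₁.rank_insert_of_not_indep_singleton h₁]
      omega
    by_cases h₂ : M₂.Indep {v}
    case neg =>
      refine ⟨S, insert v T, Finset.union_insert v S T ▸ Finset.insert_subset_insert v hST, ?_⟩
      rw [M₂.rank_insert_of_not_indep_singleton h₂]
      omega
    obtain ⟨S', T', hST', hcost'⟩ := ih (M₁.contract h₁) (M₂.contract h₂)
    have hS' := M₁.rank_contract_add_one h₁ S'
    have hT' := M₂.rank_contract_add_one h₂ T'
    have hk := maxCommon_contract_add_one_le h₁ h₂ s
    have hsum : M₁.rank S + M₂.rank T + (M₁.rank (insert v S') + M₂.rank (insert v T')) ≤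
        2 * maxCommon M₁ M₂ (insert v s) + 1 := by
      omega
    have hAB : s ⊆ insert v S' ∪ insert v T' :=
      hST'.trans (Finset.union_subset_union (Finset.subset_insert v S') (Finset.subset_insert v T'))
    obtain ⟨S₀, T₀, hcover, hcost₀⟩ := exists_cover_rank_add_rank_le_of_uncross hST hAB hsum
    exact ⟨S₀, T₀, (Finset.insert_subset (by simp) Finset.subset_union_left).trans hcover, hcost₀⟩

end Intersection

end FinMatroid

/-- **Edmonds' matroid intersection theorem:** the maximum size of a common independent
set of two matroids `M₁, M₂` on `V` equals the minimum of
`rank₁(S) + rank₂(T)` over all `S, T ⊆ V` with `S ∪ T = V`. -/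
theorem matroid_intersection_minmax (M₁ M₂ : FinMatroid V) :
    ((Finset.univ : Finset V).powerset.filter
        (fun I => M₁.Indep I ∧ M₂.Indep I)).sup Finset.card
      = (((Finset.univ : Finset V).powerset ×ˢ (Finset.univ : Finset V).powerset).filter
          (fun p => p.1 ∪ p.2 = Finset.univ)).inf'
          ⟨(Finset.univ, Finset.univ), by simp⟩
          (fun p => M₁.rank p.1 + M₂.rank p.2) := by
  apply le_antisymm
  · refine Finset.sup_le fun I hI => Finset.le_inf' _ _ fun p hp => ?_
    simp only [Finset.mem_filter] at hI hp
    exact FinMatroid.card_le_rank_add_rank hI.2.1 hI.2.2 (hp.2 ▸ Finset.subset_univ I)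
  · obtain ⟨S, T, hcover, hcost⟩ :=
      FinMatroid.exists_cover_rank_add_rank_le_maxCommon M₁ M₂ Finset.univ
    have hST : (S, T) ∈ ((Finset.univ : Finset V).powerset ×ˢ
        (Finset.univ : Finset V).powerset).filter (fun p => p.1 ∪ p.2 = Finset.univ) := by
      simpa using Finset.univ_subset_iff.1 hcover
    exact (Finset.inf'_le _ hST).trans hcost
end
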